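/- The second moment of distances between points in B(p,N) is exactly M₂(p,N) = (2/3)(p³ − 2p² + 1)·N(N+1); equivalently, Σ_{α∈B(p,N)} Σ_{β∈B(p,N)} d(α,β)² = (2/3)(p³ − 2p² + 1)·N(N+1)·(2N+1)^{2p−2}. -/

import Mathlib

/-- The cyclotomic norm: `‖α‖ = √(Σ_{j=1}^{p−1} Tr(α·ω^j)²)`. -/
noncomputable def cycNorm (p : ℕ) {K : Type*} [Field K] [Algebra ℚ K] (ω : K) (α : K) : ℝ :=
  Real.sqrt (∑ j ∈ Finset.Icc 1 (p - 1), ((Algebra.trace ℚ K (α * ω ^ j) : ℚ) : ℝ) ^ 2)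

/-- The metric induced by the cyclotomic norm: `d(α, β) = ‖α − β‖`. -/
noncomputable def cycDist (p : ℕ) {K : Type*} [Field K] [Algebra ℚ K] (ω : K) (α β : K) : ℝ :=
  cycNorm p ω (α - β)

/-- The box `B(p,N) = {a₁ω + ⋯ + a_{p−1}ω^{p−1} : aᵢ ∈ ℤ, −N ≤ aᵢ ≤ N}` as a finset of `K`. -/
noncomputable def cycBox (p : ℕ) {K : Type*} [Field K] [Algebra ℚ K] (ω : K) (N : ℕ) :
    Finset K :=
  letI := Classical.decEq K
  (Fintype.piFinset fun _ : Fin (p - 1) => Finset.Icc (-(N : ℤ)) (N : ℤ)).image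
    fun a => ∑ i : Fin (p - 1), (a i : K) * ω ^ ((i : ℕ) + 1)

/-! Write `x(a) = Σᵢ aᵢ ω^(i+1)` for `a ∈ ℤ^(p-1)`. As `Tr(ω^k)` is `p - 1` or `-1` according as
`p ∣ k` or not, `Tr(x(a) ω^(p-1-i)) = p aᵢ - Σₖ aₖ`; hence `x` is injective and
`‖x(a)‖² = Σᵢ (p aᵢ - Σₖ aₖ)² = p² Σᵢ aᵢ² + (p - 1 - 2p) (Σᵢ aᵢ)²`.
Summing over pairs `a, b` of the box, the coordinates of `a - b` are uncorrelated: the cross sums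
`Σ (aᵢ - bᵢ)(aⱼ - bⱼ)` vanish for `i ≠ j`, because the sums over `aᵢ, bᵢ` factor out. So both terms
contribute `(p - 1) V (2N+1)^(2p-4)`, with `V = Σ_{|x|,|y| ≤ N} (x - y)² = (2/3) N(N+1)(2N+1)²`,
and `(p² + p - 1 - 2p)(p - 1) = p³ - 2p² + 1`. -/

open Finset Fintype Polynomial

section PiFinsetMoments

variable {ι α R : Type*} [Fintype ι] [DecidableEq ι]

theorem sum_piFinset_sum_piFinset_prod [CommSemiring R] (s : ι → Finset α)
    (g : ι → α → α → R) :
    ∑ a ∈ piFinset s, ∑ b ∈ piFinset s, ∏ k, g k (a k) (b k) =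
      ∏ k, ∑ x ∈ s k, ∑ y ∈ s k, g k x y := by
  rw [prod_univ_sum]
  exact sum_congr rfl fun a _ => (prod_univ_sum _ _).symm

theorem sum_piFinset_sum_piFinset_prod_mem [CommSemiring R] (I : Finset α) (h : α → α → R)
    (s : Finset ι) :
    ∑ a ∈ piFinset fun _ : ι => I, ∑ b ∈ piFinset fun _ : ι => I, ∏ k ∈ s, h (a k) (b k) =
      (∑ x ∈ I, ∑ y ∈ I, h x y) ^ #s * (#I ^ 2 : R) ^ #sᶜ := by
  have factor (k : ι) : ∑ x ∈ I, ∑ y ∈ I, (if k ∈ s then h x y else 1) =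
      if k ∈ s then ∑ x ∈ I, ∑ y ∈ I, h x y else (#I ^ 2 : R) := by
    split_ifs <;> simp [sq]
  have := sum_piFinset_sum_piFinset_prod (fun _ : ι => I)
    (fun k x y => if k ∈ s then h x y else 1)
  simp only [Fintype.prod_ite_mem, factor] at this
  rw [this, prod_ite, filter_mem_eq_inter, univ_inter, filter_notMem_eq_sdiff, ← compl_eq_univ_sdiff, prod_const,
    prod_const]

variable [CommRing R] (I : Finset α) (f : α → R)

theorem sum_sum_sub_eq_zero : ∑ x ∈ I, ∑ y ∈ I, (f x - f y) = 0 := by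
  simp only [sum_sub_distrib, sum_const, ← smul_sum, sub_self]

theorem sum_piFinset_sum_piFinset_sq_sub (i : ι) :
    ∑ a ∈ piFinset fun _ : ι => I, ∑ b ∈ piFinset fun _ : ι => I, (f (a i) - f (b i)) ^ 2 =
      (∑ x ∈ I, ∑ y ∈ I, (f x - f y) ^ 2) * (#I ^ 2 : R) ^ (card ι - 1) := by
  simpa [card_compl] using
    sum_piFinset_sum_piFinset_prod_mem I (fun x y => (f x - f y) ^ 2) {i}

theorem sum_piFinset_sum_piFinset_sub_mul_sub {i j : ι} (hij : i ≠ j) :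
    ∑ a ∈ piFinset fun _ : ι => I, ∑ b ∈ piFinset fun _ : ι => I,
      (f (a i) - f (b i)) * (f (a j) - f (b j)) = 0 := by
  have := sum_piFinset_sum_piFinset_prod_mem I (fun x y => f x - f y) {i, j}
  simpa only [prod_pair hij, sum_sum_sub_eq_zero, card_pair hij, zero_pow two_ne_zero, zero_mul]
    using this

theorem sum_piFinset_sum_piFinset_sq_sum_sub :
    ∑ a ∈ piFinset fun _ : ι => I, ∑ b ∈ piFinset fun _ : ι => I,
      (∑ i, (f (a i) - f (b i))) ^ 2 =
    ∑ a ∈ piFinset fun _ : ι => I, ∑ b ∈ piFinset fun _ : ι => I, ∑ i, (f (a i) - f (b i)) ^ 2 := by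
  rw [← sum_product', ← sum_product']
  simp_rw [sq, Fintype.sum_mul_sum]
  rw [sum_comm (s := _ ×ˢ _), sum_comm (s := _ ×ˢ _)]
  refine sum_congr rfl fun i _ => ?_
  rw [sum_comm, sum_eq_single i (fun j _ hji => ?_) (by simp)]
  rw [sum_product]
  exact sum_piFinset_sum_piFinset_sub_mul_sub I f (Ne.symm hji)

theorem sum_piFinset_sum_piFinset_sum_sq_sub :
    ∑ a ∈ piFinset fun _ : ι => I, ∑ b ∈ piFinset fun _ : ι => I, ∑ i, (f (a i) - f (b i)) ^ 2 =
      card ι * ((∑ x ∈ I, ∑ y ∈ I, (f x - f y) ^ 2) * (#I ^ 2 : R) ^ (card ι - 1)) := by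
  rw [← sum_product', sum_comm]
  simp only [sum_product, sum_piFinset_sum_piFinset_sq_sub, sum_const, card_univ, nsmul_eq_mul]

end PiFinsetMoments

theorem sum_sum_sq_sub {α R : Type*} [CommRing R] (I : Finset α) (f : α → R) :
    ∑ x ∈ I, ∑ y ∈ I, (f x - f y) ^ 2 = 2 * (#I * ∑ x ∈ I, f x ^ 2 - (∑ x ∈ I, f x) ^ 2) := by
  simp only [sub_sq, sum_add_distrib, sum_sub_distrib, sum_const, nsmul_eq_mul, ← mul_sum,
    ← sum_mul]
  ring

theorem sum_Icc_neg_succ {M : Type*} [AddCommMonoid M] (g : ℤ → M) (N : ℕ) :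
    ∑ x ∈ Icc (-((N : ℤ) + 1)) (N + 1), g x =
      g (-((N : ℤ) + 1)) + g (N + 1) + ∑ x ∈ Icc (-N : ℤ) N, g x := by
  have hI : Icc (-((N : ℤ) + 1)) (N + 1) =
      insert (-((N : ℤ) + 1)) (insert ((N : ℤ) + 1) (Icc (-N : ℤ) N)) := by
    ext x
    simp only [mem_Icc, mem_insert]
    omega
  rw [hI, sum_insert (by simp; omega), sum_insert (by simp), add_assoc]

theorem sum_Icc_neg_intCast {R : Type*} [Ring R] (N : ℕ) :
    ∑ x ∈ Icc (-N : ℤ) N, (x : R) = 0 := by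
  induction N with
  | zero => simp
  | succ N ih => rw [Nat.cast_succ, sum_Icc_neg_succ, ih]; push_cast; abel

theorem sum_Icc_neg_intCast_sq (N : ℕ) :
    ∑ x ∈ Icc (-N : ℤ) N, (x : ℝ) ^ 2 = N * (N + 1) * (2 * N + 1) / 3 := by
  induction N with
  | zero => simp
  | succ N ih => rw [Nat.cast_succ, sum_Icc_neg_succ, ih]; push_cast; ring

theorem card_Icc_neg (N : ℕ) : #(Icc (-N : ℤ) N) = 2 * N + 1 := by
  simp; omega

theorem sum_sum_sq_sub_Icc_neg (N : ℕ) :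
    ∑ x ∈ Icc (-N : ℤ) N, ∑ y ∈ Icc (-N : ℤ) N, ((x : ℝ) - y) ^ 2 =
      2 / 3 * N * (N + 1) * (2 * N + 1) ^ 2 := by
  rw [sum_sum_sq_sub, sum_Icc_neg_intCast, sum_Icc_neg_intCast_sq, card_Icc_neg]
  push_cast
  ring

theorem sum_sq_mul_sub_sum {ι R : Type*} [Fintype ι] [CommRing R] (t : R) (c : ι → R) :
    ∑ i, (t * c i - ∑ k, c k) ^ 2 =
      t ^ 2 * ∑ i, c i ^ 2 + (Fintype.card ι - 2 * t) * (∑ i, c i) ^ 2 := by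
  simp only [sub_sq, sum_add_distrib, sum_sub_distrib, mul_pow, ← mul_sum, ← sum_mul, sum_const,
    card_univ, nsmul_eq_mul]
  ring

theorem sum_Icc_one_eq_sum_fin_sub {M : Type*} [AddCommMonoid M] (n : ℕ) (g : ℕ → M) :
    ∑ j ∈ Icc 1 n, g j = ∑ i : Fin n, g (n - i) := by
  rw [Fin.sum_univ_eq_sum_range (fun i => g (n - i)), ← sum_range_reflect,
    ← Ico_add_one_right_eq_Icc, sum_Ico_eq_sum_range]
  exact sum_congr rfl fun j hj => by rw [mem_range] at hj; congr 1; omega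

theorem nextCoeff_cyclotomic_prime {p : ℕ} {R : Type*} [CommRing R] [Nontrivial R]
    (hp : p.Prime) :
    (cyclotomic p R).nextCoeff = 1 := by
  have := Fact.mk hp
  have := hp.two_le
  rw [nextCoeff, natDegree_cyclotomic, Nat.totient_prime hp, if_neg (by omega),
    cyclotomic_prime, finsetSum_coeff]
  simp only [coeff_X_pow]
  rw [Finset.sum_ite_eq, if_pos (mem_range.mpr (by omega))]

noncomputable def cycPoint (p : ℕ) {K : Type*} [Field K] (ω : K) (a : Fin (p - 1) → ℤ) : K :=
  ∑ i : Fin (p - 1), (a i : K) * ω ^ ((i : ℕ) + 1)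

theorem cycPoint_sub {p : ℕ} {K : Type*} [Field K] (ω : K) (a b : Fin (p - 1) → ℤ) :
    cycPoint p ω a - cycPoint p ω b = cycPoint p ω (a - b) := by
  simp [cycPoint, ← sum_sub_distrib, sub_mul]

section CyclotomicTrace

variable {p : ℕ} {K : Type*} [Field K] [Algebra ℚ K] [IsCyclotomicExtension {p} ℚ K] {ω : K}

theorem trace_primitiveRoot_pow (hp : p.Prime) (hω : IsPrimitiveRoot ω p) (k : ℕ) :
    Algebra.trace ℚ K (ω ^ k) = if p ∣ k then (p - 1 : ℚ) else -1 := by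
  have : NeZero p := ⟨hp.ne_zero⟩
  have : CharZero K := charZero_of_injective_algebraMap (algebraMap ℚ K).injective
  split_ifs with hk
  · rw [(hω.pow_eq_one_iff_dvd k).2 hk, ← map_one (algebraMap ℚ K), Algebra.trace_algebraMap,
      IsCyclotomicExtension.finrank K (cyclotomic.irreducible_rat hp.pos), Nat.totient_prime hp]
    simp [Nat.cast_sub hp.one_le]
  · have hη : IsPrimitiveRoot (ω ^ k) p :=
      hω.pow_of_coprime k ((Nat.coprime_comm.mp ((hp.coprime_iff_not_dvd).mpr hk)))
    have hmin := cyclotomic_eq_minpoly_rat hη hp.pos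
    -- `cyclotomic_eq_minpoly_rat` is stated for the `ℚ`-algebra structure coming from `CharZero K`
    rw [Subsingleton.elim DivisionRing.toRatAlgebra ‹Algebra ℚ K›] at hmin
    rw [← hη.powerBasis_gen ℚ, (hη.powerBasis ℚ).trace_gen_eq_nextCoeff_minpoly,
      hη.powerBasis_gen ℚ, ← hmin, nextCoeff_cyclotomic_prime hp]

theorem trace_cycPoint_mul_pow (hp : p.Prime) (hω : IsPrimitiveRoot ω p)
    (a : Fin (p - 1) → ℤ) (i : Fin (p - 1)) :
    Algebra.trace ℚ K (cycPoint p ω a * ω ^ (p - 1 - i)) = p * a i - ∑ k, (a k : ℚ) := by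
  have hdvd (k : Fin (p - 1)) : p ∣ k + 1 + (p - 1 - i) ↔ k = i := by
    have := k.isLt
    have := i.isLt
    refine ⟨fun h => ?_, fun h => by rw [h]; exact dvd_of_eq (by omega)⟩
    have := Nat.eq_of_dvd_of_lt_two_mul (by omega) h (by omega)
    exact Fin.ext (by omega)
  have hterm (k : Fin (p - 1)) :
      Algebra.trace ℚ K ((a k : K) * ω ^ ((k : ℕ) + 1) * ω ^ (p - 1 - i)) =
        (if k = i then (p : ℚ) * a k else 0) - a k := by
    rw [mul_assoc, ← pow_add, ← map_intCast (algebraMap ℚ K), ← Algebra.smul_def, map_smul,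
      trace_primitiveRoot_pow hp hω, smul_eq_mul]
    simp only [hdvd]
    split_ifs <;> ring
  simp only [cycPoint, sum_mul, map_sum, hterm, sum_sub_distrib, Fintype.sum_ite_eq']

theorem cycNorm_cycPoint_sq (hp : p.Prime) (hω : IsPrimitiveRoot ω p) (a : Fin (p - 1) → ℤ) :
    cycNorm p ω (cycPoint p ω a) ^ 2 = ∑ i, ((p : ℝ) * a i - ∑ k, (a k : ℝ)) ^ 2 := by
  rw [cycNorm, Real.sq_sqrt (by positivity), sum_Icc_one_eq_sum_fin_sub]
  simp [trace_cycPoint_mul_pow hp hω]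

theorem cycPoint_injective (hp : p.Prime) (hω : IsPrimitiveRoot ω p) :
    Function.Injective (cycPoint p ω) := by
  intro a b hab
  set c := a - b
  have hc (i : Fin (p - 1)) : (p : ℚ) * c i - ∑ k, (c k : ℚ) = 0 := by
    rw [← trace_cycPoint_mul_pow hp hω, ← cycPoint_sub, hab, sub_self, zero_mul, map_zero]
  have hsum : ∑ k, (c k : ℚ) = 0 := by
    have := sum_eq_zero fun i (_ : i ∈ univ) => hc i
    rw [sum_sub_distrib, ← mul_sum, sum_const, card_univ, Fintype.card_fin, nsmul_eq_mul,
      Nat.cast_sub hp.one_le] at this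
    linear_combination this
  funext i
  have := hc i
  rw [hsum, sub_zero, mul_eq_zero] at this
  have := this.resolve_left (by exact_mod_cast hp.ne_zero)
  simpa [c, sub_eq_zero] using this

theorem sum_cycBox {M : Type*} [AddCommMonoid M] (hp : p.Prime) (hω : IsPrimitiveRoot ω p)
    (N : ℕ) (F : K → M) :
    ∑ α ∈ cycBox p ω N, F α =
      ∑ a ∈ Fintype.piFinset fun _ : Fin (p - 1) => Icc (-N : ℤ) N, F (cycPoint p ω a) := by
  classical
  exact sum_image fun a _ b _ h => cycPoint_injective hp hω h

end CyclotomicTrace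

theorem stmt11_general (p : ℕ+) (hp : (p : ℕ).Prime)
    (K : Type*) [Field K] [Algebra ℚ K] [IsCyclotomicExtension {(p : ℕ)} ℚ K]
    (ω : K) (hω : IsPrimitiveRoot ω p) (N : ℕ) :
    ∑ α ∈ cycBox p ω N, ∑ β ∈ cycBox p ω N, (cycDist p ω α β) ^ 2
      = (2 / 3) * ((p : ℝ) ^ 3 - 2 * (p : ℝ) ^ 2 + 1) * N * (N + 1) *
          (2 * (N : ℝ) + 1) ^ (2 * (p : ℕ) - 2) := by
  simp_rw [sum_cycBox hp hω, cycDist, cycPoint_sub, cycNorm_cycPoint_sq hp hω, Pi.sub_apply,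
    Int.cast_sub]
  simp_rw [sum_sq_mul_sub_sum, Fintype.card_fin, sum_add_distrib, ← mul_sum,
    sum_piFinset_sum_piFinset_sq_sum_sub]
  rw [sum_piFinset_sum_piFinset_sum_sq_sub (Icc (-N : ℤ) N) (Int.cast : ℤ → ℝ),
    sum_sum_sq_sub_Icc_neg, card_Icc_neg, Fintype.card_fin]
  obtain ⟨q, hq⟩ : ∃ q, (p : ℕ) = q + 2 := ⟨p - 2, by have := hp.two_le; omega⟩
  rw [hq, show q + 2 - 1 - 1 = q by omega, show 2 * (q + 2) - 2 = 2 * q + 2 by omega]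
  push_cast
  rw [← pow_mul]
  ring

/-- The second moment of distances:
`Σ_{α,β ∈ B(p,N)} d(α,β)² = (2/3)(p³ − 2p² + 1)·N(N+1)·(2N+1)^{2p−2}`. -/
theorem stmt11 (p : ℕ+) (hp : (p : ℕ).Prime) (hodd : Odd (p : ℕ))
    (K : Type*) [Field K] [Algebra ℚ K] [IsCyclotomicExtension {(p : ℕ)} ℚ K]
    (ω : K) (hω : IsPrimitiveRoot ω p) (N : ℕ) (hN : 0 < N) :
    ∑ α ∈ cycBox p ω N, ∑ β ∈ cycBox p ω N, (cycDist p ω α β) ^ 2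
      = (2 / 3) * ((p : ℝ) ^ 3 - 2 * (p : ℝ) ^ 2 + 1) * N * (N + 1) *
          (2 * (N : ℝ) + 1) ^ (2 * (p : ℕ) - 2) :=
  stmt11_general p hp K ω hω N
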